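/- Let l be a prime and let V be the 2-dimensional representation of Z/l over Z/l in which a generator acts by the unipotent matrix [[1,1],[0,1]]. Then the (l-1)-st symmetric power S^{l-1}(V) is isomorphic, as a Z/l-linear representation of Z/l, to the regular representation (Z/l)[Z/l]. -/

import Mathlib

/-!
Dehomogenizing at `x₀ = 1` identifies homogeneous forms of degree `l - 1` in two variables with
polynomials of degree `< l` in one variable, and Lagrange interpolation identifies those with
all functions `ℤ/l → ℤ/l`. Under these identifications the substitution `x₁ ↦ x₀ + x₁` becomes the
translation `f ↦ f (· + 1)`, so `S^{l-1}(V)` is the permutation module of `ℤ/l` acting on itself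
by translation, which is the regular representation.
-/

open MvPolynomial

/-- The substitution endomorphism of `(ℤ/l)[x₀, x₁]` given by `x₀ ↦ x₀`, `x₁ ↦ x₀ + x₁`,
i.e. the action of the generator of `ℤ/l` on the symmetric algebra of the 2-dimensional
unipotent representation `V` (generator acting by `[[1,1],[0,1]]`). -/
noncomputable def unipotentSubst (l : ℕ) :
    MvPolynomial (Fin 2) (ZMod l) →ₐ[ZMod l] MvPolynomial (Fin 2) (ZMod l) :=
  MvPolynomial.aeval ![X 0, X 0 + X 1]

namespace Polynomial

variable {R : Type*} [CommSemiring R]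

lemma natDegree_aeval_X_one_le {q : MvPolynomial (Fin 2) R} {n : ℕ} (hq : q.IsHomogeneous n) :
    (MvPolynomial.aeval ![(X : R[X]), 1] q).natDegree ≤ n := by
  rw [q.as_sum, map_sum]
  refine natDegree_sum_le_of_forall_le _ _ fun m hm => ?_
  have hdeg : m 0 + m 1 = n := by
    simpa [Finsupp.weight_apply, Finsupp.sum_fintype, Fin.sum_univ_two] using
      hq (MvPolynomial.mem_support_iff.mp hm)
  rw [MvPolynomial.aeval_monomial, Finsupp.prod_fintype _ _ (by simp), Fin.prod_univ_two]
  simp only [Matrix.cons_val_zero, Matrix.cons_val_one, one_pow, mul_one]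
  refine (natDegree_C_mul_le _ _).trans ?_
  exact (natDegree_X_pow_le _).trans (by omega)

noncomputable def homogenizeEquiv (n : ℕ) :
    degreeLE R n ≃ₗ[R] homogeneousSubmodule (Fin 2) R n where
  toFun p := ⟨p.1.homogenize n, isHomogeneous_homogenize _⟩
  invFun q := ⟨MvPolynomial.aeval ![X, 1] q.1,
    mem_degreeLE.2 (degree_le_of_natDegree_le (natDegree_aeval_X_one_le q.2))⟩
  map_add' _ _ := Subtype.ext (homogenize_add _ _ _)
  map_smul' _ _ := Subtype.ext (homogenize_smul _ _ _)
  left_inv p := Subtype.ext <|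
    aeval_homogenize_X_one _ (natDegree_le_iff_degree_le.2 (mem_degreeLE.1 p.2))
  right_inv q := Subtype.ext (homogenize_eq_of_isHomogeneous q.2 rfl)

end Polynomial

namespace MvPolynomial

section CommSemiring

variable {R σ τ : Type*} [CommSemiring R]

noncomputable def homogeneousSubmoduleRenameEquiv (e : σ ≃ τ) (n : ℕ) :
    homogeneousSubmodule σ R n ≃ₗ[R] homogeneousSubmodule τ R n where
  toFun p := ⟨rename e p, p.2.rename_isHomogeneous⟩
  invFun p := ⟨rename e.symm p, p.2.rename_isHomogeneous⟩
  map_add' _ _ := Subtype.ext (map_add _ _ _)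
  map_smul' _ _ := Subtype.ext (map_smul _ _ _)
  left_inv p := Subtype.ext (by simp [rename_rename])
  right_inv p := Subtype.ext (by simp [rename_rename])

lemma IsHomogeneous.aeval_unipotent {p : MvPolynomial (Fin 2) R} {n : ℕ}
    (hp : p.IsHomogeneous n) :
    (MvPolynomial.aeval ![(X 0 : MvPolynomial (Fin 2) R), X 0 + X 1] p).IsHomogeneous n := by
  refine (one_mul n ▸ hp.aeval (n := 1) _ fun i => ?_)
  fin_cases i
  · exact isHomogeneous_X R 0
  · exact (isHomogeneous_X R 0).add (isHomogeneous_X R 1)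

lemma eval_aeval_unipotent (p : MvPolynomial (Fin 2) R) (a t : R) :
    eval ![a, t] (aeval ![X 0, X 0 + X 1] p) = eval ![a, a + t] p := by
  change aeval ![a, t] (aeval ![X 0, X 0 + X 1] p) = aeval ![a, a + t] p
  rw [comp_aeval_apply]
  congr 2
  funext i
  fin_cases i <;> simp

end CommSemiring

variable {K : Type*} [Field K] [Fintype K] [DecidableEq K]

/-- Mathlib's `Polynomial.homogenize` dehomogenizes at `x₁ = 1`; the swap moves this to `x₀ = 1`,
where the substitution `x₁ ↦ x₀ + x₁` becomes a translation. -/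
noncomputable def homogeneousSubmoduleEquivFun {n : ℕ} (hn : n + 1 = Fintype.card K) :
    homogeneousSubmodule (Fin 2) K n ≃ₗ[K] (K → K) :=
  homogeneousSubmoduleRenameEquiv (Equiv.swap 0 1) n ≪≫ₗ (Polynomial.homogenizeEquiv n).symm ≪≫ₗ
    LinearEquiv.ofEq _ _
      (by rw [← Polynomial.degreeLT_succ_eq_degreeLE, hn, Finset.card_univ]) ≪≫ₗ
    Lagrange.funEquivDegreeLT (s := Finset.univ) (v := id) (Set.injOn_id _) ≪≫ₗ
    LinearEquiv.funCongrLeft K K (Equiv.subtypeUnivEquiv Finset.mem_univ).symm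

lemma homogeneousSubmoduleEquivFun_apply {n : ℕ} (hn : n + 1 = Fintype.card K)
    (p : homogeneousSubmodule (Fin 2) K n) (t : K) :
    homogeneousSubmoduleEquivFun hn p t = eval ![1, t] (p : MvPolynomial (Fin 2) K) := by
  change Polynomial.aeval t (aeval ![Polynomial.X, 1] (rename (Equiv.swap 0 1) p.1)) =
    aeval ![1, t] p.1
  rw [aeval_rename, comp_aeval_apply]
  congr 2
  funext i
  fin_cases i <;> simp

end MvPolynomial

namespace MonoidAlgebra

variable (k A : Type*) [Semiring k] [AddGroup A] [Finite A]

/-- The reflection `t ↦ -t` of the index is what turns right translation of functions into left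
multiplication in the group algebra. -/
noncomputable def funEquivNeg : (A → k) ≃ₗ[k] MonoidAlgebra k (Multiplicative A) :=
  LinearEquiv.funCongrLeft k k (Multiplicative.toAdd.trans (Equiv.neg A)) ≪≫ₗ
    (Finsupp.linearEquivFunOnFinite k k (Multiplicative A)).symm ≪≫ₗ (coeffLinearEquiv k).symm

variable {k A}

lemma coeff_funEquivNeg (f : A → k) (a : Multiplicative A) :
    (funEquivNeg k A f).coeff a = f (-a.toAdd) := rfl

lemma funEquivNeg_add_right (f : A → k) (a : A) :
    funEquivNeg k A (fun t => f (t + a)) =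
      of k _ (Multiplicative.ofAdd a) * funEquivNeg k A f := by
  ext b
  rw [of_apply, coeff_single_mul_apply, one_mul, coeff_funEquivNeg, coeff_funEquivNeg]
  simp [toAdd_mul]

end MonoidAlgebra

theorem stmt_2_general (l : ℕ) [Fact l.Prime] :
    ∃ (hstab : ∀ p ∈ homogeneousSubmodule (Fin 2) (ZMod l) (l - 1),
        unipotentSubst l p ∈ homogeneousSubmodule (Fin 2) (ZMod l) (l - 1))
      (φ : homogeneousSubmodule (Fin 2) (ZMod l) (l - 1) ≃ₗ[ZMod l]
        MonoidAlgebra (ZMod l) (Multiplicative (ZMod l))),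
      ∀ (p : MvPolynomial (Fin 2) (ZMod l))
        (hp : p ∈ homogeneousSubmodule (Fin 2) (ZMod l) (l - 1)),
        φ ⟨unipotentSubst l p, hstab p hp⟩ =
          MonoidAlgebra.of (ZMod l) (Multiplicative (ZMod l))
            (Multiplicative.ofAdd (1 : ZMod l)) * φ ⟨p, hp⟩ := by
  have hcard : l - 1 + 1 = Fintype.card (ZMod l) := by
    rw [ZMod.card]; exact Nat.sub_add_cancel (Fact.out : l.Prime).one_le
  let φ := homogeneousSubmoduleEquivFun hcard ≪≫ₗ MonoidAlgebra.funEquivNeg (ZMod l) (ZMod l)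
  refine ⟨fun p hp => IsHomogeneous.aeval_unipotent hp, φ, fun p hp => ?_⟩
  rw [LinearEquiv.trans_apply, LinearEquiv.trans_apply, ← MonoidAlgebra.funEquivNeg_add_right]
  congr 1
  funext t
  simp only [homogeneousSubmoduleEquivFun_apply, unipotentSubst, eval_aeval_unipotent, add_comm]

/-- For a prime `l`, the `(l-1)`-st symmetric power of the 2-dimensional unipotent
representation of `ℤ/l` over `ℤ/l` — realized as the space of homogeneous polynomials of
degree `l-1` in two variables, with the generator acting by the substitution
`x₀ ↦ x₀, x₁ ↦ x₀ + x₁` — is isomorphic, as a representation of `ℤ/l`, to the regular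
representation `(ℤ/l)[ℤ/l]`.  Equivariance is stated with respect to the generator
`g = 1` of `ℤ/l`, which generates the whole group. -/
theorem stmt_2 (l : ℕ) (hl : l.Prime) [Fact l.Prime] :
    ∃ (hstab : ∀ p ∈ homogeneousSubmodule (Fin 2) (ZMod l) (l - 1),
        unipotentSubst l p ∈ homogeneousSubmodule (Fin 2) (ZMod l) (l - 1))
      (φ : homogeneousSubmodule (Fin 2) (ZMod l) (l - 1) ≃ₗ[ZMod l]
        MonoidAlgebra (ZMod l) (Multiplicative (ZMod l))),
      ∀ (p : MvPolynomial (Fin 2) (ZMod l))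
        (hp : p ∈ homogeneousSubmodule (Fin 2) (ZMod l) (l - 1)),
        φ ⟨unipotentSubst l p, hstab p hp⟩ =
          MonoidAlgebra.of (ZMod l) (Multiplicative (ZMod l))
            (Multiplicative.ofAdd (1 : ZMod l)) * φ ⟨p, hp⟩ :=
  stmt_2_general l
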